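/- For every integer t ≥ 1, the graph K_{t+1,t+1} \ tK_2, namely the bipartite graph with vertex parts {x_1,…,x_{t+1}} and {y_1,…,y_{t+1}} in which x_i is adjacent to y_j if and only if it is not the case that i = j ≤ t, has z-chromatic number equal to 2. -/
import Mathlib


/-- A proper vertex coloring of `G` using exactly the colors `{1, …, k}`:
every vertex gets a color in `{1, …, k}`, adjacent vertices get different
colors, and every color in `{1, …, k}` is used. -/
def IsProperColoring {V : Type*} (G : SimpleGraph V) (k : ℕ) (c : V → ℕ) : Prop :=
  (∀ v, c v ∈ Finset.Icc 1 k) ∧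
  (∀ u v, G.Adj u v → c u ≠ c v) ∧
  (∀ i ∈ Finset.Icc 1 k, ∃ v, c v = i)

/-- A Grundy coloring of `G` using `k` colors: a proper coloring using `k` colors
such that every vertex of color `j` has, for each color `i < j`, a neighbor of color `i`. -/
def IsGrundyColoring {V : Type*} (G : SimpleGraph V) (k : ℕ) (c : V → ℕ) : Prop :=
  IsProperColoring G k c ∧
  ∀ v, ∀ i ∈ Finset.Icc 1 k, i < c v → ∃ w, G.Adj v w ∧ c w = i

/-- In a coloring `c` of `G` with colors `{1, …, k}`, a vertex `v` is color-dominating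
if for every color `j ∈ {1, …, k}` different from the color of `v`, the vertex `v`
has a neighbor of color `j`. -/
def IsCDVertex {V : Type*} (G : SimpleGraph V) (k : ℕ) (c : V → ℕ) (v : V) : Prop :=
  ∀ j ∈ Finset.Icc 1 k, j ≠ c v → ∃ w, G.Adj v w ∧ c w = j

/-- A color-dominating coloring (b-coloring) of `G` using `k` colors: a proper coloring
using `k` colors in which every color class contains a color-dominating vertex. -/
def IsBColoring {V : Type*} (G : SimpleGraph V) (k : ℕ) (c : V → ℕ) : Prop :=
  IsProperColoring G k c ∧
  ∀ i ∈ Finset.Icc 1 k, ∃ v, c v = i ∧ IsCDVertex G k c v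

/-- A z-coloring of `G` using `k` colors: a proper coloring which is simultaneously
a Grundy coloring and a color-dominating coloring, and which admits color-dominating
vertices `u 1, …, u k` with `c (u j) = j` such that `u k` is adjacent to each `u j`, `j ≠ k`. -/
def IsZColoring {V : Type*} (G : SimpleGraph V) (k : ℕ) (c : V → ℕ) : Prop :=
  IsGrundyColoring G k c ∧ IsBColoring G k c ∧
  ∃ u : ℕ → V,
    (∀ j ∈ Finset.Icc 1 k, c (u j) = j ∧ IsCDVertex G k c (u j)) ∧
    (∀ j ∈ Finset.Icc 1 k, j ≠ k → G.Adj (u k) (u j))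

/-- The Grundy number of `G`: the maximum `k` such that `G` admits a Grundy coloring
using `k` colors. -/
noncomputable def grundyNumber {V : Type*} (G : SimpleGraph V) : ℕ :=
  sSup {k | ∃ c : V → ℕ, IsGrundyColoring G k c}

/-- The b-chromatic number of `G`: the maximum `k` such that `G` admits a b-coloring
using `k` colors. -/
noncomputable def bNumber {V : Type*} (G : SimpleGraph V) : ℕ :=
  sSup {k | ∃ c : V → ℕ, IsBColoring G k c}

/-- The z-chromatic number of `G`: the maximum `k` such that `G` admits a z-coloring
using `k` colors. -/
noncomputable def zNumber {V : Type*} (G : SimpleGraph V) : ℕ :=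
  sSup {k | ∃ c : V → ℕ, IsZColoring G k c}

/-- The base relation of `K_{t+1,t+1} \ tK_2`: the left vertex `x_i` is related to the
right vertex `y_j` iff it is not the case that `i = j ≤ t` (1-indexed; with the
0-indexed `Fin (t+1)` the condition `i = j ≤ t` reads `i = j ∧ i < t`). -/
def MRel' (t : ℕ) : (Fin (t + 1) ⊕ Fin (t + 1)) → (Fin (t + 1) ⊕ Fin (t + 1)) → Prop
  | Sum.inl i, Sum.inr j => ¬(i = j ∧ (i : ℕ) < t)
  | _, _ => False

/-- The graph `K_{t+1,t+1} \ tK_2`. -/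
def Mgraph' (t : ℕ) : SimpleGraph (Fin (t + 1) ⊕ Fin (t + 1)) := SimpleGraph.fromRel (MRel' t)

lemma Mgraph'_adj (t : ℕ) (i j : Fin (t+1)) :
    (Mgraph' t).Adj (Sum.inl i) (Sum.inr j) ↔ ¬(i = j ∧ (i:ℕ) < t) := by
  simp [Mgraph', MRel', SimpleGraph.fromRel_adj]

lemma Mgraph'_adj' (t : ℕ) (i j : Fin (t+1)) :
    (Mgraph' t).Adj (Sum.inr j) (Sum.inl i) ↔ ¬(i = j ∧ (i:ℕ) < t) := by
  simp [Mgraph', MRel', SimpleGraph.fromRel_adj]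

lemma Mgraph'_not_ll (t : ℕ) (i j : Fin (t+1)) : ¬ (Mgraph' t).Adj (Sum.inl i) (Sum.inl j) := by
  simp [Mgraph', MRel', SimpleGraph.fromRel_adj]

lemma Mgraph'_not_rr (t : ℕ) (i j : Fin (t+1)) : ¬ (Mgraph' t).Adj (Sum.inr i) (Sum.inr j) := by
  simp [Mgraph', MRel', SimpleGraph.fromRel_adj]

/-- For every `t ≥ 1`, `z(K_{t+1,t+1} \ tK_2) = 2`. -/
theorem statement_10 (t : ℕ) (ht : 1 ≤ t) : zNumber (Mgraph' t) = 2 := by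
  set lt : Fin (t+1) := ⟨t, Nat.lt_succ_self t⟩ with hlt
  have hadj_lt : ∀ j : Fin (t+1), (Mgraph' t).Adj (Sum.inl lt) (Sum.inr j) := by
    intro j; rw [Mgraph'_adj]; rintro ⟨-, h⟩; simp [hlt] at h
  have hadj_rt : ∀ i : Fin (t+1), (Mgraph' t).Adj (Sum.inr lt) (Sum.inl i) := by
    intro i; rw [Mgraph'_adj']; rintro ⟨h1, h2⟩; rw [h1] at h2; simp [hlt] at h2
  -- the 2-coloring
  set c : (Fin (t+1) ⊕ Fin (t+1)) → ℕ := Sum.elim (fun _ => 1) (fun _ => 2) with hc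
  have hprop : IsProperColoring (Mgraph' t) 2 c := by
    refine ⟨fun v => ?_, fun u v huv => ?_, fun i hi => ?_⟩
    · rcases v with i | i <;> simp [hc]
    · rcases u with i | i <;> rcases v with j | j
      · exact absurd huv (Mgraph'_not_ll t i j)
      · simp [hc]
      · simp [hc]
      · exact absurd huv (Mgraph'_not_rr t i j)
    · obtain ⟨hi1, hi2⟩ := Finset.mem_Icc.mp hi
      interval_cases i
      · exact ⟨Sum.inl lt, rfl⟩
      · exact ⟨Sum.inr lt, rfl⟩
  have hcd1 : IsCDVertex (Mgraph' t) 2 c (Sum.inl lt) := by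
    intro j hj hne
    simp only [Finset.mem_Icc] at hj
    have : j = 2 := by simp [hc] at hne; omega
    exact ⟨Sum.inr lt, hadj_lt lt, by simp [hc, this]⟩
  have hcd2 : IsCDVertex (Mgraph' t) 2 c (Sum.inr lt) := by
    intro j hj hne
    simp only [Finset.mem_Icc] at hj
    have : j = 1 := by simp [hc] at hne; omega
    exact ⟨Sum.inl lt, hadj_rt lt, by simp [hc, this]⟩
  have hz : IsZColoring (Mgraph' t) 2 c := by
    refine ⟨⟨hprop, ?_⟩, ⟨hprop, ?_⟩, ?_⟩
    · intro v i hi hlt'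
      simp only [Finset.mem_Icc] at hi
      rcases v with j | j
      · simp [hc] at hlt'; omega
      · have : i = 1 := by simp [hc] at hlt'; omega
        exact ⟨Sum.inl lt, ((Mgraph' t).adj_symm (hadj_lt j)), by simp [hc, this]⟩
    · intro i hi
      obtain ⟨hi1, hi2⟩ := Finset.mem_Icc.mp hi
      interval_cases i
      · exact ⟨Sum.inl lt, rfl, hcd1⟩
      · exact ⟨Sum.inr lt, rfl, hcd2⟩
    · refine ⟨fun j => if j = 1 then Sum.inl lt else Sum.inr lt, fun j hj => ?_, fun j hj hne => ?_⟩
      · obtain ⟨hj1, hj2⟩ := Finset.mem_Icc.mp hj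
        interval_cases j
        · simpa using ⟨rfl, hcd1⟩
        · simpa using ⟨rfl, hcd2⟩
      · simp only [Finset.mem_Icc] at hj
        have : j = 1 := by omega
        subst this
        simpa using hadj_rt lt
  -- upper bound
  have hub : ∀ k ∈ {k | ∃ c : (Fin (t+1) ⊕ Fin (t+1)) → ℕ, IsZColoring (Mgraph' t) k c}, k ≤ 2 := by
    rintro k ⟨d, hgr, hB, -⟩
    by_contra hk
    push_neg at hk
    set p := d (Sum.inl lt) with hp
    set q := d (Sum.inr lt) with hq
    obtain ⟨hmem, hadjne, -⟩ := hB.1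
    have hppos := Finset.mem_Icc.mp (hmem (Sum.inl lt))
    have hqpos := Finset.mem_Icc.mp (hmem (Sum.inr lt))
    have hpq : p ≠ q := hadjne _ _ (hadj_lt lt)
    -- no right vertex has color p, no left vertex has color q
    have hR : ∀ j : Fin (t+1), d (Sum.inr j) ≠ p := fun j h =>
      (hadjne _ _ (hadj_lt j)).symm h
    have hL : ∀ i : Fin (t+1), d (Sum.inl i) ≠ q := fun i h =>
      (hadjne _ _ (hadj_rt i)).symm h
    obtain ⟨r, hr1, hrk, hrp, hrq⟩ : ∃ r, 1 ≤ r ∧ r ≤ k ∧ r ≠ p ∧ r ≠ q := by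
      refine ⟨if p ≠ 1 ∧ q ≠ 1 then 1 else if p ≠ 2 ∧ q ≠ 2 then 2 else 3, ?_⟩
      split_ifs <;> omega
    obtain ⟨v, hvr, hvcd⟩ := hB.2 r (Finset.mem_Icc.mpr ⟨hr1, hrk⟩)
    rcases v with i | i
    · obtain ⟨w, hw, hwp⟩ := hvcd p (Finset.mem_Icc.mpr hppos) (by rw [hvr]; exact fun h => hrp h.symm)
      rcases w with j | j
      · exact Mgraph'_not_ll t i j hw
      · exact hR j hwp
    · obtain ⟨w, hw, hwq⟩ := hvcd q (Finset.mem_Icc.mpr hqpos) (by rw [hvr]; exact fun h => hrq h.symm)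
      rcases w with j | j
      · exact hL j hwq
      · exact Mgraph'_not_rr t i j hw
  refine le_antisymm (csSup_le ⟨2, c, hz⟩ hub) (le_csSup ⟨2, hub⟩ ⟨c, hz⟩)
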